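/- arXiv:1012.1502 — 4 statements merged into one kernel-verified Lean document; each statement's English description precedes it below -/
import Mathlib

section
/- Let P and S be disjoint finite sets of points in the Euclidean plane, let k be a natural number, and let r > 0. Suppose there exists a subset S' ⊆ S with |S'| ≤ k and a tree whose vertex set is P ∪ S' all of whose edges have Euclidean length at most r (in particular, all weights w_r(p,q) for p,q ∈ P are finite). Let T be any spanning tree of the complete graph on vertex set P that minимizes the total weight ∑_{{p,q} ∈ E(T)} w_r(p,q) among all spanning trees of the complete graph on P. Then ∑_{{p,q} ∈ E(T)} ⌊w_r(p,q)/2⌋ ≤ k. -/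
/-!
Let `S'` and `T₀` be the witnesses of the hypothesis and write `w'` for the weight computed with
Steiner set `S'`; it dominates the weight `w` of the statement on `P`. Root `T` at `p₀`. For an
edge `e` of `T` and `i < ⌊w(e)/2⌋`, the class of the far endpoint of `e` under chains of pairs of
`P` of `w'`-weight at most `2i+1` stays beyond `e`: by the cut property of minimum spanning trees
every pair separated by `e` has `w'`-weight at least `w(e) ≥ 2i+2`. Walking in `G_r` from that
class to `p₀`, the `w'`-distance to the class increases by at most one, and only at points of
`S'`, so some `s ∈ S'` is at distance exactly `i+1`. Charging `(e, i)` to such an `s` is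
injective: two classes at levels `i ≤ i'` at distances `i+1`, `i'+1` from `s` are linked through
`s` at level `2i'+1`, which forces `i = i'` and a common class, and a class lying beyond both `e`
and `e'` forces `e = e'`. Hence the sum is at most `|S'| ≤ k`.
-/

open scoped ENNReal

noncomputable section

/-- Points of the Euclidean plane. -/
abbrev Pt : Type := EuclideanSpace ℝ (Fin 2)

noncomputable instance : DecidableEq Pt := Classical.decEq _

/-- The graph `G_r` on vertex set `P ∪ S`: two distinct points of `P ∪ S` are adjacent
iff their Euclidean distance is at most `r`.  (Points outside `P ∪ S` are isolated.) -/
def stGraph (P S : Finset Pt) (r : ℝ) : SimpleGraph Pt where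
  Adj x y := x ≠ y ∧ x ∈ P ∪ S ∧ y ∈ P ∪ S ∧ dist x y ≤ r
  symm := by
    constructor
    rintro x y ⟨h1, h2, h3, h4⟩
    exact ⟨h1.symm, h3, h2, by rwa [dist_comm]⟩
  loopless := by constructor; rintro x ⟨h, -⟩; exact h rfl

/-- `wgt P S r p q` : the minimum, over all paths from `p` to `q` in `G_r`, of the number of
vertices from `S` appearing on the path; `⊤` if there is no such path. -/
def wgt (P S : Finset Pt) (r : ℝ) (p q : Pt) : ℕ∞ :=
  sInf {n : ℕ∞ | ∃ wk : (stGraph P S r).Walk p q, wk.IsPath ∧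
    n = ((wk.support.filter (fun x => decide (x ∈ S))).length : ℕ∞)}

/-- The weight as a function on unordered pairs (it is symmetric, so the symmetrization
`min (wgt p q) (wgt q p)` coincides with `wgt p q`). -/
def ewgt (P S : Finset Pt) (r : ℝ) : Sym2 Pt → ℕ∞ :=
  Sym2.lift ⟨fun p q => min (wgt P S r p q) (wgt P S r q p), fun _ _ => min_comm _ _⟩

open SimpleGraph

namespace SimpleGraph

variable {V : Type*} {G : SimpleGraph V}

theorem Reachable.reachable_deleteEdges_or {w x : V} (h : G.Reachable w x) (y : V) :
    (G.deleteEdges {s(x, y)}).Reachable w x ∨ (G.deleteEdges {s(x, y)}).Reachable w y := by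
  classical
  obtain ⟨p, hp⟩ := h.exists_isPath
  by_cases he : s(x, y) ∈ p.edges
  · have hy := p.snd_mem_support_of_mem_edges he
    have hx := Walk.endpoint_notMem_support_takeUntil hp hy (p.adj_of_mem_edges he).ne
    refine .inr ⟨(p.takeUntil y hy).toDeleteEdges _ fun e he' hxy => hx ?_⟩
    exact (p.takeUntil y hy).fst_mem_support_of_mem_edges (Set.mem_singleton_iff.mp hxy ▸ he')
  · exact .inl ⟨p.toDeleteEdges _ fun e he' hxy => he (Set.mem_singleton_iff.mp hxy ▸ he')⟩

theorem dist_add_dist_le_of_not_reachable_deleteEdges {p x v : V} {e : Sym2 V}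
    (hpx : G.Reachable p x) (hsep : ¬(G.deleteEdges {e}).Reachable p x) (hv : v ∈ e) :
    G.dist p v + G.dist v x ≤ G.dist p x := by
  classical
  obtain ⟨π, -, hπ⟩ := hpx.exists_path_of_dist
  obtain ⟨b, rfl⟩ := Sym2.mem_iff_exists.mp hv
  have hvπ := π.fst_mem_support_of_mem_edges (π.mem_edges_of_not_reachable_deleteEdges hsep)
  calc G.dist p v + G.dist v x
      ≤ (π.takeUntil v hvπ).length + (π.dropUntil v hvπ).length :=
        add_le_add (dist_le _) (dist_le _)
    _ = G.dist p x := by rw [← Walk.length_append, Walk.take_spec, hπ]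

theorem Connected.eq_of_not_reachable_deleteEdges {p v v' : V} {e e' : Sym2 V}
    (hG : G.Connected) (he : e ∈ G.edgeSet) (he' : e' ∈ G.edgeSet) (hv : v ∈ e) (hv' : v' ∈ e')
    (hsep : ¬(G.deleteEdges {e}).Reachable p v') (hsep' : ¬(G.deleteEdges {e'}).Reachable p v) :
    e = e' := by
  obtain ⟨u, rfl⟩ := Sym2.mem_iff_exists.mp hv
  obtain ⟨u', rfl⟩ := Sym2.mem_iff_exists.mp hv'
  have h₁ := dist_add_dist_le_of_not_reachable_deleteEdges (hG p v') hsep (Sym2.mem_mk_left v u)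
  have h₂ := dist_add_dist_le_of_not_reachable_deleteEdges (hG p v) hsep' (Sym2.mem_mk_left v' u')
  obtain rfl : v = v' := hG.dist_eq_zero_iff.mp (by omega)
  -- `u` is closer to `p` than `v`, so it cannot lie beyond `e'` as well
  by_contra hne
  have hu : (G.deleteEdges {s(v, u')}).Reachable p u := by
    by_contra hu
    have h₃ := dist_add_dist_le_of_not_reachable_deleteEdges (hG p u) hu (Sym2.mem_mk_left v u')
    have h₄ := dist_add_dist_le_of_not_reachable_deleteEdges (hG p v) hsep (Sym2.mem_mk_right v u)
    rw [dist_eq_one_iff_adj.mpr he] at h₃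
    rw [dist_eq_one_iff_adj.mpr (G.adj_symm he)] at h₄
    omega
  exact hsep' (hu.trans (Adj.reachable ⟨G.adj_symm he, fun h => hne (Sym2.eq_swap.trans h.1)⟩))

theorem IsAcyclic.exists_mem_not_reachable_deleteEdges {e : Sym2 V} (hG : G.IsAcyclic)
    (he : e ∈ G.edgeSet) (p : V) : ∃ v ∈ e, ¬(G.deleteEdges {e}).Reachable p v := by
  induction e with
  | h x y =>
    by_contra! h
    exact isAcyclic_iff_forall_isBridge.mp hG he
      (((h x (Sym2.mem_mk_left x y)).symm).trans (h y (Sym2.mem_mk_right x y)))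

theorem Reachable.of_forall_adj_reachable {H : SimpleGraph V}
    (hGH : ∀ x y, G.Adj x y → H.Reachable x y) {a b : V} (h : G.Reachable a b) :
    H.Reachable a b := by
  rw [reachable_iff_reflTransGen] at h ⊢
  exact Relation.reflTransGen_closed (fun x y hxy => (reachable_iff_reflTransGen x y).mp
    (hGH x y hxy)) _ _ h

theorem IsTree.deleteEdges_sup_edge {T : SimpleGraph V} (hT : T.IsTree) {u v a b : V}
    (hab : ¬(T.deleteEdges {s(u, v)}).Reachable a b) :
    (T.deleteEdges {s(u, v)} ⊔ edge a b).IsTree := by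
  set D := T.deleteEdges {s(u, v)}
  have hD : D ≤ D ⊔ edge a b := le_sup_left
  have hab' : (D ⊔ edge a b).Adj a b :=
    Or.inr ((edge_adj ..).mpr ⟨Or.inl ⟨rfl, rfl⟩, fun h => hab (h ▸ .rfl)⟩)
  have huv : (D ⊔ edge a b).Reachable u v := by
    rcases (hT.connected a u).reachable_deleteEdges_or v with hau | hav <;>
    rcases (hT.connected b u).reachable_deleteEdges_or v with hbu | hbv
    · exact absurd (hau.trans hbu.symm) hab
    · exact ((hau.mono hD).symm.trans hab'.reachable).trans (hbv.mono hD)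
    · exact ((hav.mono hD).symm.trans hab'.reachable).trans (hbu.mono hD) |>.symm
    · exact absurd (hav.trans hbv.symm) hab
  refine ⟨(connected_iff _).mpr ⟨fun x y => (hT.connected x y).of_forall_adj_reachable ?_,
    hT.connected.nonempty⟩, (hT.isAcyclic.anti (deleteEdges_le _)).sup_edge_of_not_reachable hab⟩
  intro x y hxy
  by_cases he : s(x, y) = s(u, v)
  · rcases Sym2.eq_iff.mp he with ⟨rfl, rfl⟩ | ⟨rfl, rfl⟩
    exacts [huv, huv.symm]
  · exact (hD (deleteEdges_adj.mpr ⟨hxy, he⟩)).reachable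

def IsMinSpanningTree [Finite V] (W : Sym2 V → ℕ∞) (T : SimpleGraph V) : Prop :=
  T.IsTree ∧ ∀ T' : SimpleGraph V, T'.IsTree →
    ∑ e ∈ T.edgeSet.toFinite.toFinset, W e ≤ ∑ e ∈ T'.edgeSet.toFinite.toFinset, W e

theorem IsMinSpanningTree.le_of_not_reachable_deleteEdges [Finite V] {W : Sym2 V → ℕ∞}
    {T : SimpleGraph V} (hT : IsMinSpanningTree W T) (hW : ∀ e, W e ≠ ⊤) {e : Sym2 V}
    (he : e ∈ T.edgeSet) {a b : V} (hab : ¬(T.deleteEdges {e}).Reachable a b) :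
    W e ≤ W s(a, b) := by
  classical
  induction e with | h u v => ?_
  have huv : T.Adj u v := he
  have hne : a ≠ b := fun h => hab (h ▸ .rfl)
  have hnotin : s(a, b) ∉ T.edgeSet.toFinite.toFinset.erase s(u, v) := by
    simp only [Finset.mem_erase, Set.Finite.mem_toFinset, mem_edgeSet]
    exact fun ⟨hne, hadj⟩ => hab (deleteEdges_adj.mpr ⟨hadj, hne⟩).reachable
  have hedges : (T.deleteEdges {s(u, v)} ⊔ edge a b).edgeSet.toFinite.toFinset =
      insert s(a, b) (T.edgeSet.toFinite.toFinset.erase s(u, v)) := by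
    ext e
    simp only [edgeSet_sup, edgeSet_deleteEdges, edgeSet_edge_of_ne hne, Set.union_singleton,
      Set.Finite.toFinset_insert, Finset.mem_insert, Set.Finite.mem_toFinset, Set.mem_sdiff,
      Set.mem_singleton_iff, Finset.mem_erase, ne_eq]
    tauto
  have hrest : ∑ e ∈ T.edgeSet.toFinite.toFinset.erase s(u, v), W e ≠ ⊤ := by
    simpa [WithTop.sum_eq_top] using fun e _ _ => hW e
  have hmin := hT.2 _ (hT.1.deleteEdges_sup_edge hab)
  rw [hedges, Finset.sum_insert hnotin, ← Finset.add_sum_erase _ _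
    (T.edgeSet.toFinite.mem_toFinset.mpr (T.mem_edgeSet.mpr huv)), add_comm,
    add_comm (W s(a, b))] at hmin
  exact (WithTop.add_le_add_iff_left hrest).mp hmin

theorem Walk.exists_mem_eq_of_lt_of_le [DecidableEq V] {S : Finset V} {f : V → ℕ∞}
    (hf : ∀ y z, G.Adj y z → f z ≤ f y + if z ∈ S then 1 else 0) {a b : V} (w : G.Walk a b)
    {j : ℕ} (ha : f a < j) (hb : j ≤ f b) : ∃ s ∈ S, f s = j := by
  induction w with
  | nil => exact absurd (ha.trans_le hb) (lt_irrefl _)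
  | @cons a m b hadj w ih =>
    obtain hm | hm := lt_or_ge (f m) j
    · exact ih hm hb
    have hstep := hf a m hadj
    split_ifs at hstep with hmS
    · exact ⟨m, hmS, le_antisymm (hstep.trans (Order.add_one_le_of_lt ha)) hm⟩
    · exact absurd (hm.trans hstep) (by simpa using ha)

end SimpleGraph

def steinerCount (S : Finset Pt) {G : SimpleGraph Pt} {p q : Pt} (w : G.Walk p q) : ℕ :=
  (w.support.filter (fun x => decide (x ∈ S))).length

section Weight

variable {P S : Finset Pt} {r : ℝ} {p q x y z : Pt}

theorem steinerCount_bypass_le {G : SimpleGraph Pt} (w : G.Walk p q) :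
    steinerCount S w.bypass ≤ steinerCount S w := by
  unfold steinerCount
  rw [← List.toFinset_card_of_nodup (w.bypass_isPath.support_nodup.filter _)]
  refine (Finset.card_le_card fun v hv => ?_).trans (List.toFinset_card_le _)
  simp only [List.mem_toFinset, List.mem_filter] at hv ⊢
  exact ⟨w.support_bypass_subset_support hv.1, hv.2⟩

theorem steinerCount_append {G : SimpleGraph Pt} (w₁ : G.Walk p q) (w₂ : G.Walk q z) :
    steinerCount S (w₁.append w₂) + (if q ∈ S then 1 else 0) =
      steinerCount S w₁ + steinerCount S w₂ := by
  unfold steinerCount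
  rw [Walk.support_append, List.filter_append, List.length_append, ← w₂.cons_tail_support,
    List.tail_cons, List.filter_cons]
  split_ifs <;> grind

theorem steinerCount_concat {G : SimpleGraph Pt} (w : G.Walk p q) (h : G.Adj q z) :
    steinerCount S (w.concat h) = steinerCount S w + if z ∈ S then 1 else 0 := by
  unfold steinerCount
  rw [Walk.support_concat, List.filter_append, List.length_append]
  split_ifs with hz <;> simp [hz]

theorem wgt_le_steinerCount (w : (stGraph P S r).Walk p q) :
    wgt P S r p q ≤ steinerCount S w :=
  calc wgt P S r p q ≤ steinerCount S w.bypass := sInf_le ⟨w.bypass, w.bypass_isPath, rfl⟩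
    _ ≤ steinerCount S w := by exact_mod_cast steinerCount_bypass_le w

theorem exists_steinerCount_eq_wgt (h : wgt P S r p q ≠ ⊤) :
    ∃ w : (stGraph P S r).Walk p q, (steinerCount S w : ℕ∞) = wgt P S r p q := by
  obtain he | hne := Set.eq_empty_or_nonempty
    {n : ℕ∞ | ∃ w : (stGraph P S r).Walk p q, w.IsPath ∧ n = steinerCount S w}
  · unfold steinerCount at he
    exact absurd (by rw [wgt, he, sInf_empty]) h
  obtain ⟨w, -, hw⟩ := csInf_mem hne
  exact ⟨w, hw.symm⟩

theorem wgt_ne_top (h : (stGraph P S r).Reachable p q) : wgt P S r p q ≠ ⊤ :=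
  ne_top_of_le_ne_top (ENat.natCast_ne_top _) (wgt_le_steinerCount h.some)

theorem wgt_comm (p q : Pt) : wgt P S r p q = wgt P S r q p := by
  unfold wgt
  congr 1
  ext n
  constructor <;> rintro ⟨w, hw, rfl⟩ <;>
    exact ⟨w.reverse, hw.reverse, by
      rw [Walk.support_reverse, List.filter_reverse, List.length_reverse]⟩

theorem wgt_self (hp : p ∉ S) : wgt P S r p p = 0 :=
  nonpos_iff_eq_zero.mp ((wgt_le_steinerCount Walk.nil).trans (by simp [steinerCount, hp]))

theorem wgt_le_of_adj (h : (stGraph P S r).Adj y z) :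
    wgt P S r x z ≤ wgt P S r x y + if z ∈ S then 1 else 0 := by
  by_cases hxy : wgt P S r x y = ⊤
  · simp [hxy]
  obtain ⟨w, hw⟩ := exists_steinerCount_eq_wgt hxy
  calc wgt P S r x z ≤ steinerCount S (w.concat h) := wgt_le_steinerCount _
    _ = wgt P S r x y + if z ∈ S then 1 else 0 := by
      rw [steinerCount_concat, ← hw]; split_ifs <;> simp

theorem wgt_add_one_le_of_mem (hy : y ∈ S) :
    wgt P S r x z + 1 ≤ wgt P S r x y + wgt P S r y z := by
  by_cases hxy : wgt P S r x y = ⊤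
  · simp [hxy]
  by_cases hyz : wgt P S r y z = ⊤
  · simp [hyz]
  obtain ⟨w₁, hw₁⟩ := exists_steinerCount_eq_wgt hxy
  obtain ⟨w₂, hw₂⟩ := exists_steinerCount_eq_wgt hyz
  have hcount := steinerCount_append (S := S) w₁ w₂
  rw [if_pos hy] at hcount
  calc wgt P S r x z + 1 ≤ (steinerCount S (w₁.append w₂) : ℕ∞) + 1 :=
        add_le_add_left (wgt_le_steinerCount _) 1
    _ = wgt P S r x y + wgt P S r y z := by rw [← hw₁, ← hw₂]; exact_mod_cast hcount

theorem mem_union_of_mem_support (w : (stGraph P S r).Walk p q) (hp : p ∈ P ∪ S) {v : Pt}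
    (hv : v ∈ w.support) : v ∈ P ∪ S := by
  induction w with
  | nil => simp_all
  | cons h w ih =>
    rcases List.mem_cons.mp hv with rfl | hv
    exacts [hp, ih h.2.2.1 hv]

theorem wgt_le_wgt_of_subset {S' : Finset Pt} (hPS : Disjoint P S) (hS' : S' ⊆ S)
    (hx : x ∈ P ∪ S') : wgt P S r x y ≤ wgt P S' r x y := by
  by_cases hxy : wgt P S' r x y = ⊤
  · simp [hxy]
  obtain ⟨w, hw⟩ := exists_steinerCount_eq_wgt hxy
  have hle : stGraph P S' r ≤ stGraph P S r := fun a b ⟨hne, ha, hb, hd⟩ =>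
    ⟨hne, Finset.union_subset_union_right hS' ha, Finset.union_subset_union_right hS' hb, hd⟩
  refine (wgt_le_steinerCount (w.mapLe hle)).trans (hw ▸ le_of_eq ?_)
  unfold steinerCount
  rw [Walk.support_mapLe_eq_support, List.filter_congr fun v hv => ?_]
  rcases Finset.mem_union.mp (mem_union_of_mem_support w hx hv) with hvP | hvS'
  · have hvS := Finset.disjoint_left.mp hPS hvP
    simp [hvS, mt (@hS' v) hvS]
  · simp [hS' hvS', hvS']

end Weight

def Linked (P S : Finset Pt) (r : ℝ) (t : ℕ) : ↥P → ↥P → Prop :=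
  Relation.ReflTransGen fun a b => wgt P S r a b ≤ t

def classDist (P S : Finset Pt) (r : ℝ) (t : ℕ) (a : ↥P) (y : Pt) : ℕ∞ :=
  ⨅ x : {x : ↥P // Linked P S r t a x}, wgt P S r x.1 y

section ClassDist

variable {P S : Finset Pt} {r : ℝ} {t t' : ℕ} {a b x : ↥P} {y : Pt}

theorem Linked.symm (h : Linked P S r t a b) : Linked P S r t b a := by
  induction h with
  | refl => exact .refl
  | tail _ hxy ih => exact .head (by rwa [wgt_comm]) ih

theorem Linked.mono (htt : t ≤ t') (h : Linked P S r t a b) : Linked P S r t' a b :=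
  Relation.ReflTransGen.mono (fun (x y : ↥P) (hxy : wgt P S r x y ≤ t) =>
    hxy.trans (Nat.cast_le.mpr htt)) _ _ h

theorem classDist_le (hx : Linked P S r t a x) : classDist P S r t a y ≤ wgt P S r x y :=
  iInf_le (fun x : {x : ↥P // Linked P S r t a x} => wgt P S r x.1 y) ⟨x, hx⟩

theorem exists_linked_wgt_eq_classDist (P S : Finset Pt) (r : ℝ) (t : ℕ) (a : ↥P) (y : Pt) :
    ∃ x, Linked P S r t a x ∧ wgt P S r x y = classDist P S r t a y := by
  have : Nonempty {x : ↥P // Linked P S r t a x} := ⟨⟨a, .refl⟩⟩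
  obtain ⟨⟨x, hx⟩, hxy⟩ := ciInf_mem fun x : {x : ↥P // Linked P S r t a x} => wgt P S r x.1 y
  exact ⟨x, hx, hxy⟩

theorem classDist_le_classDist (htt : t ≤ t') (hba : Linked P S r t' b a) :
    classDist P S r t' b y ≤ classDist P S r t a y :=
  le_iInf fun x => classDist_le (hba.trans (x.2.mono htt))

theorem classDist_self (hPS : Disjoint P S) : classDist P S r t a a = 0 :=
  nonpos_iff_eq_zero.mp
    ((classDist_le .refl).trans_eq (wgt_self (Finset.disjoint_left.mp hPS a.2)))

theorem classDist_le_of_adj {z : Pt} (h : (stGraph P S r).Adj y z) :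
    classDist P S r t a z ≤ classDist P S r t a y + if z ∈ S then 1 else 0 := by
  obtain ⟨x, hx, hxy⟩ := exists_linked_wgt_eq_classDist P S r t a y
  exact (classDist_le hx).trans (hxy ▸ wgt_le_of_adj h)

theorem add_one_le_classDist (hab : ¬Linked P S r t a b) :
    (t : ℕ∞) + 1 ≤ classDist P S r t a b := by
  obtain ⟨x, hx, hxb⟩ := exists_linked_wgt_eq_classDist P S r t a b
  rw [← hxb]
  by_contra! h
  exact hab (hx.tail (Order.le_of_lt_add_one h))

theorem linked_of_classDist_add_classDist_le {s : Pt} (hs : s ∈ S) (htt : t ≤ t')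
    (h : classDist P S r t a s + classDist P S r t' b s ≤ t' + 1) : Linked P S r t' a b := by
  obtain ⟨x, hax, hxs⟩ := exists_linked_wgt_eq_classDist P S r t a s
  obtain ⟨y, hby, hys⟩ := exists_linked_wgt_eq_classDist P S r t' b s
  have hxy : wgt P S r x y + 1 ≤ t' + 1 := by
    calc wgt P S r x y + 1 ≤ wgt P S r x s + wgt P S r s y := wgt_add_one_le_of_mem hs
      _ ≤ t' + 1 := by rwa [wgt_comm s, hxs, hys]
  exact ((hax.mono htt).tail ((ENat.add_le_add_iff_right ENat.one_ne_top).mp hxy)).trans hby.symm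

theorem exists_mem_classDist_eq (hPS : Disjoint P S) (hab : ¬Linked P S r t a b)
    (hreach : (stGraph P S r).Reachable a b) {j : ℕ} (hj : 0 < j) (hjt : j ≤ t + 1) :
    ∃ s ∈ S, classDist P S r t a s = j :=
  hreach.some.exists_mem_eq_of_lt_of_le (fun _ _ => classDist_le_of_adj)
    (by rw [classDist_self hPS]; exact_mod_cast hj)
    (le_trans (by exact_mod_cast hjt) (add_one_le_classDist hab))

end ClassDist

section Counting

variable {P S : Finset Pt} {r : ℝ} {T : SimpleGraph ↥P} {W : Sym2 ↥P → ℕ∞}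

theorem Linked.reachable_deleteEdges {e : Sym2 ↥P}
    (hcut : ∀ a b : ↥P, ¬(T.deleteEdges {e}).Reachable a b → W e ≤ wgt P S r a b)
    {t : ℕ} (ht : (t : ℕ∞) < W e) {a b : ↥P} (h : Linked P S r t a b) :
    (T.deleteEdges {e}).Reachable a b := by
  induction h with
  | refl => rfl
  | tail _ hxy ih =>
    refine ih.trans (by_contra fun hn => ?_)
    exact absurd ((hcut _ _ hn).trans hxy) (not_le.mpr ht)

theorem eq_and_linked_of_classDist_eq {s : Pt} (hs : s ∈ S) {i i' : ℕ} (hii' : i ≤ i')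
    {v v' : ↥P} (hv : classDist P S r (2 * i + 1) v s = i + 1)
    (hv' : classDist P S r (2 * i' + 1) v' s = i' + 1) :
    i = i' ∧ Linked P S r (2 * i + 1) v v' := by
  have hlink : Linked P S r (2 * i' + 1) v v' :=
    linked_of_classDist_add_classDist_le (t := 2 * i + 1) (t' := 2 * i' + 1) hs (by omega)
      (by rw [hv, hv']; norm_cast; omega)
  have hle := classDist_le_classDist (y := s) (by omega : 2 * i + 1 ≤ 2 * i' + 1) hlink.symm
  rw [hv, hv'] at hle
  obtain rfl : i = i' := le_antisymm hii' (by simpa using hle)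
  exact ⟨rfl, hlink⟩

theorem sum_toNat_div_two_le_card (hPS : Disjoint P S) (hT : T.IsTree)
    (hreach : ∀ a b : ↥P, (stGraph P S r).Reachable a b)
    (hcut : ∀ e ∈ T.edgeSet, ∀ a b : ↥P,
      ¬(T.deleteEdges {e}).Reachable a b → W e ≤ wgt P S r a b) :
    ∑ e ∈ T.edgeSet.toFinite.toFinset, (W e).toNat / 2 ≤ S.card := by
  classical
  obtain ⟨p₀⟩ := hT.connected.nonempty
  set levels := T.edgeSet.toFinite.toFinset.sigma fun e => Finset.range ((W e).toNat / 2)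
  have hlevel : ∀ x ∈ levels, x.1 ∈ T.edgeSet ∧ ((2 * x.2 + 1 : ℕ) : ℕ∞) < W x.1 := by
    intro x hx
    simp only [levels, Finset.mem_sigma, Set.Finite.mem_toFinset, Finset.mem_range] at hx
    refine ⟨hx.1, lt_of_lt_of_le ?_ (ENat.natCast_toNat_le_self _)⟩
    exact_mod_cast (by omega : 2 * x.2 + 1 < (W x.1).toNat)
  let charged (x : Σ _ : Sym2 ↥P, ℕ) (s : Pt) : Prop :=
    ∃ v ∈ x.1, ¬(T.deleteEdges {x.1}).Reachable p₀ v ∧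
      classDist P S r (2 * x.2 + 1) v s = x.2 + 1
  calc ∑ e ∈ T.edgeSet.toFinite.toFinset, (W e).toNat / 2 = levels.card := by
        simp [levels, Finset.card_sigma]
    _ ≤ S.card := Finset.card_le_card_of_forall_subsingleton charged ?_ ?_
  · intro x hx
    obtain ⟨he, ht⟩ := hlevel x hx
    obtain ⟨v, hv, hsep⟩ := hT.isAcyclic.exists_mem_not_reachable_deleteEdges he p₀
    have hnl : ¬Linked P S r (2 * x.2 + 1) v p₀ := fun h =>
      hsep ((h.reachable_deleteEdges (hcut _ he) ht).symm)
    obtain ⟨s, hs, hvs⟩ := exists_mem_classDist_eq hPS hnl (hreach v p₀) (j := x.2 + 1)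
      (by omega) (by omega)
    exact ⟨s, hs, v, hv, hsep, by exact_mod_cast hvs⟩
  · intro s hs x hx y hy
    wlog hxy : x.2 ≤ y.2 generalizing x y
    · exact (this hy hx (le_of_not_ge hxy)).symm
    obtain ⟨hxT, hxt⟩ := hlevel x hx.1
    obtain ⟨hyT, hyt⟩ := hlevel y hy.1
    obtain ⟨v, hv, hvsep, hvs⟩ := hx.2
    obtain ⟨v', hv', hv'sep, hv's⟩ := hy.2
    obtain ⟨hxy, hlink⟩ := eq_and_linked_of_classDist_eq hs hxy hvs hv's
    have h₁ := hlink.reachable_deleteEdges (hcut _ hxT) hxt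
    have h₂ := hlink.symm.reachable_deleteEdges (hcut _ hyT) (hxy ▸ hyt)
    exact Sigma.ext (hT.connected.eq_of_not_reachable_deleteEdges hxT hyT hv hv'
      (fun h => hvsep (h.trans h₁.symm)) (fun h => hv'sep (h.trans h₂.symm))) (heq_of_eq hxy)

end Counting

theorem stGraph_reachable_of_isTree {P S : Finset Pt} {r : ℝ} {T₀ : SimpleGraph ↥(P ∪ S)}
    (hT₀ : T₀.IsTree) (hT₀r : ∀ x y : ↥(P ∪ S), T₀.Adj x y → dist (x : Pt) (y : Pt) ≤ r)
    (x y : ↥(P ∪ S)) : (stGraph P S r).Reachable x y :=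
  (hT₀.connected x y).map (G' := stGraph P S r)
    ⟨Subtype.val, fun {a b} hab => ⟨Subtype.coe_injective.ne hab.ne, a.2, b.2, hT₀r a b hab⟩⟩

theorem ewgt_map_le_wgt {P S S' : Finset Pt} {r : ℝ} (hPS : Disjoint P S) (hS' : S' ⊆ S)
    (a b : ↥P) : ewgt P S r (s(a, b).map Subtype.val) ≤ wgt P S' r a b :=
  (min_le_left _ _).trans (wgt_le_wgt_of_subset hPS hS' (Finset.mem_union_left _ a.2))

theorem stmt1_general (P S : Finset Pt) (hPS : Disjoint P S) (k : ℕ) (r : ℝ)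
    (h : ∃ S' : Finset Pt, S' ⊆ S ∧ S'.card ≤ k ∧
      ∃ T₀ : SimpleGraph ↥(P ∪ S'), T₀.IsTree ∧
        ∀ x y : ↥(P ∪ S'), T₀.Adj x y → dist (x : Pt) (y : Pt) ≤ r)
    (T : SimpleGraph ↥P) (hT : T.IsTree)
    (hmin : ∀ T'' : SimpleGraph ↥P, T''.IsTree →
      ∑ e ∈ T.edgeSet.toFinite.toFinset, ewgt P S r (e.map Subtype.val) ≤
      ∑ e ∈ T''.edgeSet.toFinite.toFinset, ewgt P S r (e.map Subtype.val)) :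
    ∑ e ∈ T.edgeSet.toFinite.toFinset,
      (ewgt P S r (e.map Subtype.val)).toNat / 2 ≤ k := by
  obtain ⟨S', hS'S, hS'k, T₀, hT₀, hT₀r⟩ := h
  have hreach (a b : ↥P) : (stGraph P S' r).Reachable a b :=
    stGraph_reachable_of_isTree hT₀ hT₀r ⟨a, Finset.mem_union_left _ a.2⟩
      ⟨b, Finset.mem_union_left _ b.2⟩
  have hfin (e : Sym2 ↥P) : ewgt P S r (e.map Subtype.val) ≠ ⊤ := by
    induction e with
    | h a b => exact ne_top_of_le_ne_top (wgt_ne_top (hreach a b)) (ewgt_map_le_wgt hPS hS'S a b)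
  have hmst : SimpleGraph.IsMinSpanningTree (fun e => ewgt P S r (e.map Subtype.val)) T :=
    ⟨hT, hmin⟩
  refine (sum_toNat_div_two_le_card (hPS.mono_right hS'S) hT hreach
    fun e he a b hab => ?_).trans hS'k
  exact (hmst.le_of_not_reachable_deleteEdges hfin he hab).trans (ewgt_map_le_wgt hPS hS'S a b)

theorem stmt1 (P S : Finset Pt) (hPS : Disjoint P S) (k : ℕ) (r : ℝ) (hr : 0 < r)
    (h : ∃ S' : Finset Pt, S' ⊆ S ∧ S'.card ≤ k ∧
      ∃ T₀ : SimpleGraph ↥(P ∪ S'), T₀.IsTree ∧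
        ∀ x y : ↥(P ∪ S'), T₀.Adj x y → dist (x : Pt) (y : Pt) ≤ r)
    (T : SimpleGraph ↥P) (hT : T.IsTree)
    (hmin : ∀ T'' : SimpleGraph ↥P, T''.IsTree →
      ∑ e ∈ T.edgeSet.toFinite.toFinset, ewgt P S r (e.map Subtype.val) ≤
      ∑ e ∈ T''.edgeSet.toFinite.toFinset, ewgt P S r (e.map Subtype.val)) :
    ∑ e ∈ T.edgeSet.toFinite.toFinset,
      (ewgt P S r (e.map Subtype.val)).toNat / 2 ≤ k :=
  stmt1_general P S hPS k r h T hT hmin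
end
end

section
/- Let G be a finite connected simple graph with edge weights w : E(G) → ℝ, and let T be a spanning tree of G minimizing the total weight ∑_{e ∈ E(T)} w(e) among all spanning trees of G. Then for every nondecreasing function f : ℝ → ℝ and every spanning tree T' of G, one has ∑_{e ∈ E(T)} f(w(e)) ≤ ∑_{e ∈ E(T')} f(w(e)). -/
/-!
Exchange argument. If `T ≠ T'`, pick an edge `e = ab` of `T` not in `T'`. Deleting `e` splits `T`
into two components, and the `T'`-path from `a` to `b` crosses between them along an edge `g` of
`T'` not in `T`. Then both `T - e + g` and `T' - g + e` are spanning trees. Minimality of `T`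
applied to `T - e + g` gives `w e ≤ w g`, hence `f (w e) ≤ f (w g)`, so `T' - g + e` is no worse
than `T'` for the weights `f ∘ w` and shares one more edge with `T`; induct on `|E(T) \ E(T')|`.
-/

namespace SimpleGraph

variable {V : Type*}

lemma reachable_deleteEdges_or_of_reachable {G : SimpleGraph V} {a b v : V}
    (h : G.Reachable a v) :
    (G.deleteEdges {s(a, b)}).Reachable a v ∨ (G.deleteEdges {s(a, b)}).Reachable b v := by
  rw [reachable_iff_reflTransGen] at h
  induction h with
  | refl => exact Or.inl .rfl
  | @tail u x _ hux ih =>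
    by_cases he : s(u, x) = s(a, b)
    · rcases Sym2.eq_iff.mp he with ⟨-, rfl⟩ | ⟨-, rfl⟩
      · exact Or.inr .rfl
      · exact Or.inl .rfl
    · have hux' : (G.deleteEdges {s(a, b)}).Reachable u x :=
        (deleteEdges_adj.mpr ⟨hux, he⟩).reachable
      exact ih.imp (·.trans hux') (·.trans hux')

lemma deleteEdges_sup_edge_le {G H : SimpleGraph V} (hH : H ≤ G) (s : Set (Sym2 V)) {x y : V}
    (hxy : G.Adj x y) : H.deleteEdges s ⊔ edge x y ≤ G :=
  sup_le ((deleteEdges_le _).trans hH) ((edge_le_iff _).mpr (.inr hxy))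

lemma IsTree.isTree_deleteEdges_sup_edge {H : SimpleGraph V} (hH : H.IsTree) {a b x y : V}
    (hsep : ¬ (H.deleteEdges {s(a, b)}).Reachable x y) :
    (H.deleteEdges {s(a, b)} ⊔ edge x y).IsTree := by
  set D := H.deleteEdges {s(a, b)}
  have hD : D ≤ D ⊔ edge x y := le_sup_left
  have hside : ∀ v, D.Reachable a v ∨ D.Reachable b v := fun v ↦
    reachable_deleteEdges_or_of_reachable (hH.connected.preconnected a v)
  have hxy : (D ⊔ edge x y).Reachable x y := Adj.reachable <| .inr <|
    (edge_adj ..).mpr ⟨.inl ⟨rfl, rfl⟩, fun h ↦ hsep (h ▸ .rfl)⟩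
  have hab : (D ⊔ edge x y).Reachable a b := by
    rcases hside x with hx | hx <;> rcases hside y with hy | hy
    · exact absurd (hx.symm.trans hy) hsep
    · exact (hx.mono hD).trans (hxy.trans (hy.mono hD).symm)
    · exact (hy.mono hD).trans (hxy.symm.trans (hx.mono hD).symm)
    · exact absurd (hx.symm.trans hy) hsep
  refine ⟨(connected_iff_exists_forall_reachable _).mpr ⟨a, fun v ↦ ?_⟩,
    (hH.isAcyclic.anti (deleteEdges_le _)).sup_edge_of_not_reachable hsep⟩
  exact (hside v).elim (·.mono hD) (hab.trans <| ·.mono hD)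

lemma IsAcyclic.exists_exchange {T T' : SimpleGraph V} (hT : T.IsAcyclic) (hT' : T'.IsTree)
    {a b : V} (hab : T.Adj a b) (hab' : ¬ T'.Adj a b) :
    ∃ x y, T'.Adj x y ∧ ¬ T.Adj x y ∧ ¬ (T.deleteEdges {s(a, b)}).Reachable x y ∧
      ¬ (T'.deleteEdges {s(x, y)}).Reachable a b := by
  classical
  set D := T.deleteEdges {s(a, b)}
  obtain ⟨p, hp⟩ := hT'.connected.exists_isPath a b
  obtain ⟨⟨⟨x, y⟩, hxy⟩, hd, hx, hy⟩ :=
    p.exists_boundary_dart {v | D.Reachable a v} .rfl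
      (isAcyclic_iff_forall_adj_isBridge.mp hT hab)
  have hsep : ¬ D.Reachable x y := fun h ↦ hy (hx.trans h)
  have hxy_mem : s(x, y) ∈ p.edges := List.mem_map_of_mem hd
  refine ⟨x, y, hxy, fun hT ↦ hsep (deleteEdges_adj.mpr ⟨hT, ?_⟩).reachable, hsep, ?_⟩
  · rintro (he : s(x, y) = s(a, b))
    exact hab' (he ▸ hxy : s(a, b) ∈ T'.edgeSet)
  · -- `s(x, y)` lies on the `T'`-path from `a` to `b`, which is the only one.
    rw [reachable_deleteEdges_iff_exists_walk]
    rintro ⟨q, hq⟩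
    have hpq : (⟨p, hp⟩ : T'.Path a b) = q.toPath :=
      (hT'.isAcyclic.subsingleton_path a b).elim _ _
    exact hq (q.edges_toPath_subset_edges (hpq ▸ hxy_mem))

lemma sum_edgeSet_deleteEdges_sup_edge [Finite V] {M : Type*} [AddCommGroup M]
    {H : SimpleGraph V} {a b x y : V} (hab : H.Adj a b) (hxy : x ≠ y) (hxy' : ¬ H.Adj x y)
    (φ : Sym2 V → M) :
    ∑ e ∈ (H.deleteEdges {s(a, b)} ⊔ edge x y).edgeSet.toFinite.toFinset, φ e =
      ∑ e ∈ H.edgeSet.toFinite.toFinset, φ e - φ s(a, b) + φ s(x, y) := by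
  classical
  have : (H.deleteEdges {s(a, b)} ⊔ edge x y).edgeSet.toFinite.toFinset =
      insert s(x, y) (H.edgeSet.toFinite.toFinset.erase s(a, b)) := by
    ext e
    obtain rfl | he := eq_or_ne e s(x, y)
    · simp [edgeSet_sup, edgeSet_edge, hxy]
    · simp [edgeSet_sup, edgeSet_edge, he, and_comm]
  rw [this, Finset.sum_insert (by simp [hxy']), Finset.sum_erase_eq_sub (by simpa using hab)]
  abel

lemma ncard_edgeSet_sdiff_deleteEdges_sup_edge_lt [Finite V] {T T' : SimpleGraph V} {a b x y : V}
    (hab : T.Adj a b) (hab' : ¬ T'.Adj a b) (hxy : ¬ T.Adj x y) :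
    (T.edgeSet \ (T'.deleteEdges {s(x, y)} ⊔ edge a b).edgeSet).ncard <
      (T.edgeSet \ T'.edgeSet).ncard := by
  refine Set.ncard_lt_ncard (Set.ssubset_iff_exists.mpr
    ⟨fun e he ↦ ⟨he.1, fun he' ↦ ?_⟩, s(a, b), ⟨hab, hab'⟩, ?_⟩) (Set.toFinite _)
  · refine he.2 (edgeSet_sup .. ▸ Or.inl (edgeSet_deleteEdges .. ▸ ⟨he', ?_⟩))
    rintro (rfl : e = s(x, y))
    exact hxy he.1
  · simp [edgeSet_sup, hab.ne]

end SimpleGraph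

open SimpleGraph in
theorem stmt5_general {V : Type*} [Fintype V] (G : SimpleGraph V)
    (w : Sym2 V → ℝ) (T : SimpleGraph V) (hTG : T ≤ G) (hT : T.IsTree)
    (hmin : ∀ T' : SimpleGraph V, T' ≤ G → T'.IsTree →
      ∑ e ∈ T.edgeSet.toFinite.toFinset, w e ≤
      ∑ e ∈ T'.edgeSet.toFinite.toFinset, w e)
    (f : ℝ → ℝ) (hf : Monotone f)
    (T' : SimpleGraph V) (hT'G : T' ≤ G) (hT' : T'.IsTree) :
    ∑ e ∈ T.edgeSet.toFinite.toFinset, f (w e) ≤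
    ∑ e ∈ T'.edgeSet.toFinite.toFinset, f (w e) := by
  induction hn : (T.edgeSet \ T'.edgeSet).ncard using Nat.strong_induction_on generalizing T'
    with | _ n ih =>
  by_cases hle : T ≤ T'
  · rw [(isTree_iff_maximal_isAcyclic.mp hT).2.eq_of_le hT'.isAcyclic hle]
  obtain ⟨a, b, hab, hab'⟩ : ∃ a b, T.Adj a b ∧ ¬ T'.Adj a b := by
    simpa [le_iff_adj] using hle
  obtain ⟨x, y, hxy, hxy', hsep, hsep'⟩ := hT.isAcyclic.exists_exchange hT' hab hab'
  have hwe : w s(a, b) ≤ w s(x, y) := by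
    have := hmin _ (deleteEdges_sup_edge_le hTG _ (hT'G hxy)) (hT.isTree_deleteEdges_sup_edge hsep)
    rw [sum_edgeSet_deleteEdges_sup_edge hab hxy.ne hxy'] at this
    linarith
  calc ∑ e ∈ T.edgeSet.toFinite.toFinset, f (w e)
      ≤ ∑ e ∈ (T'.deleteEdges {s(x, y)} ⊔ edge a b).edgeSet.toFinite.toFinset, f (w e) :=
        ih _ (hn ▸ ncard_edgeSet_sdiff_deleteEdges_sup_edge_lt hab hab' hxy') _
          (deleteEdges_sup_edge_le hT'G _ (hTG hab))
          (hT'.isTree_deleteEdges_sup_edge hsep') rfl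
    _ = ∑ e ∈ T'.edgeSet.toFinite.toFinset, f (w e) - f (w s(x, y)) + f (w s(a, b)) :=
        sum_edgeSet_deleteEdges_sup_edge hxy hab.ne hab' _
    _ ≤ ∑ e ∈ T'.edgeSet.toFinite.toFinset, f (w e) := by linarith [hf hwe]

/-- If `T` is a minimum-weight spanning tree of a finite connected simple graph `G` with
edge weights `w`, then for every nondecreasing `f : ℝ → ℝ`, `T` also minimizes
`∑ f(w(e))` among all spanning trees of `G`.  A spanning tree of `G` is a subgraph
(on the same vertex set) `T ≤ G` which is a tree. -/
theorem stmt5 {V : Type*} [Fintype V] (G : SimpleGraph V) (hG : G.Connected)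
    (w : Sym2 V → ℝ) (T : SimpleGraph V) (hTG : T ≤ G) (hT : T.IsTree)
    (hmin : ∀ T' : SimpleGraph V, T' ≤ G → T'.IsTree →
      ∑ e ∈ T.edgeSet.toFinite.toFinset, w e ≤
      ∑ e ∈ T'.edgeSet.toFinite.toFinset, w e)
    (f : ℝ → ℝ) (hf : Monotone f)
    (T' : SimpleGraph V) (hT'G : T' ≤ G) (hT' : T'.IsTree) :
    ∑ e ∈ T.edgeSet.toFinite.toFinset, f (w e) ≤
    ∑ e ∈ T'.edgeSet.toFinite.toFinset, f (w e) :=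
  stmt5_general G w T hTG hT hmin f hf T' hT'G hT'
end

section
/- Let P and S be disjoint finite sets of points in the Euclidean plane with |P| ≥ 2, let k be a natural number, and suppose at least one Steiner tree of P with at most k Steiner points exists. Let r̂ be the infimum of all r > 0 for which there exists a tree T' with vertex set P such that every edge {p,q} of T' satisfies w_r(p,q) < ∞ and ∑_{{p,q} ∈ E(T')} ⌊w_r(p,q)/2⌋ ≤ k. Then: (i) every Steiner tree of P with at most k Steiner points has bottleneck at least r̂; and (ii) there exists a Steiner tree of P with at most k Steiner points whose bottleneck is at most 2·r̂. In particular, there exists a Steiner tree of P with at most k Steiner points whose bottleneck is at most twice the minimum bottleneck over all Steiner trees of P with at most k Steiner points. -/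
open scoped ENNReal

noncomputable section

/-- The bottleneck of a geometric tree: the maximum Euclidean length of its edges. -/
def bottleneck {V : Finset Pt} (T : SimpleGraph ↥V) : ℝ :=
  sSup {d : ℝ | ∃ x y : ↥V, T.Adj x y ∧ d = dist (x : Pt) (y : Pt)}

/-- `goodR P S k r` : there is a tree `T'` on vertex set `P` all of whose edges `{p,q}`
satisfy `w_r(p,q) < ∞` and `∑ ⌊w_r(p,q)/2⌋ ≤ k`. -/
def goodR (P S : Finset Pt) (k : ℕ) (r : ℝ) : Prop :=
  ∃ T' : SimpleGraph ↥P, T'.IsTree ∧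
    (∀ e ∈ T'.edgeSet, ewgt P S r (e.map Subtype.val) ≠ ⊤) ∧
    ∑ e ∈ T'.edgeSet.toFinite.toFinset,
      (ewgt P S r (e.map Subtype.val)).toNat / 2 ≤ k

/-!
(i) A Steiner tree `T` with bottleneck `b` lives in `G_b`. Removing a root `ρ` splits `T` into
a component `C` and the rest; by induction each side yields links between its terminals, paid
`⌊w_b/2⌋` each, and a port terminal reached from its root through `d` Steiner points, all within
the Steiner budget of that side. The two ports are linked through `ρ` at cost `⌊(d₁ + d₂)/2⌋`,
and keeping the cheaper port keeps the budget. So `b` is admissible and `r̂ ≤ b`.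

(ii) For admissible `r`, along a path realising `w_r(p, q)` keep every other Steiner point:
`⌊w_r(p, q)/2⌋` of them, with consecutive kept points at distance at most `2r`. A spanning tree
of the `2r`-disk graph on `P` and the kept points has bottleneck at most `2r`. Bottlenecks take
finitely many values, so an optimal Steiner tree exists, and it has bottleneck at most `2r̂`.
-/

open SimpleGraph Finset

namespace SimpleGraph

variable {V : Type*} {G G' : SimpleGraph V}

namespace Walk

variable [DecidableEq V] (S : Finset V)

def countIn {u v : V} (w : G.Walk u v) : ℕ :=
  (w.support.filter (· ∈ S)).length

@[simp]
lemma countIn_nil {u : V} : (nil : G.Walk u u).countIn S = if u ∈ S then 1 else 0 := by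
  split_ifs with h <;> simp [countIn, h]

@[simp]
lemma countIn_cons {u v w : V} (h : G.Adj u v) (p : G.Walk v w) :
    (cons h p).countIn S = (if u ∈ S then 1 else 0) + p.countIn S := by
  split_ifs with hu <;> simp [countIn, hu, Nat.add_comm]

@[simp]
lemma countIn_reverse {u v : V} (p : G.Walk u v) : p.reverse.countIn S = p.countIn S := by
  simp [countIn, support_reverse, List.filter_reverse]

lemma countIn_append_cons {u v x w : V} (p : G.Walk u v) (h : G.Adj v x) (q : G.Walk x w) :
    (p.append (cons h q)).countIn S = p.countIn S + q.countIn S := by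
  simp [countIn, support_append]

lemma countIn_bypass_le {u v : V} (p : G.Walk u v) : p.bypass.countIn S ≤ p.countIn S :=
  (p.support_bypass_sublist_support.filter _).length_le

end Walk

def ReachableWithin (G : SimpleGraph V) (s : Set V) (a b : V) : Prop :=
  ∃ w : G.Walk a b, ∀ x ∈ w.support, x ∈ s

namespace ReachableWithin

variable {s t : Set V} {a b c : V}

lemma refl (ha : a ∈ s) : G.ReachableWithin s a a :=
  ⟨.nil, by simpa using ha⟩

lemma left_mem (h : G.ReachableWithin s a b) : a ∈ s :=
  h.choose_spec a h.choose.start_mem_support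

lemma right_mem (h : G.ReachableWithin s a b) : b ∈ s :=
  h.choose_spec b h.choose.end_mem_support

lemma symm (h : G.ReachableWithin s a b) : G.ReachableWithin s b a :=
  let ⟨w, hw⟩ := h
  ⟨w.reverse, by simpa using hw⟩

lemma trans (h₁ : G.ReachableWithin s a b) (h₂ : G.ReachableWithin s b c) :
    G.ReachableWithin s a c :=
  let ⟨w₁, hw₁⟩ := h₁
  let ⟨w₂, hw₂⟩ := h₂
  ⟨w₁.append w₂, fun x hx => by
    rcases List.mem_append.1 (Walk.support_append w₁ w₂ ▸ hx) with hx | hx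
    exacts [hw₁ x hx, hw₂ x (List.mem_of_mem_tail hx)]⟩

lemma mono (hG : G ≤ G') (hs : s ⊆ t) (h : G.ReachableWithin s a b) :
    G'.ReachableWithin t a b :=
  let ⟨w, hw⟩ := h
  ⟨w.mapLe hG, fun x hx => hs (hw x (Walk.support_mapLe_eq_support hG w ▸ hx))⟩

lemma reachable_induce (h : G.ReachableWithin s a b) :
    (G.induce s).Reachable ⟨a, h.left_mem⟩ ⟨b, h.right_mem⟩ :=
  let ⟨w, hw⟩ := h
  ⟨w.induce s hw⟩

lemma within_component (h : G.ReachableWithin s a b) :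
    G.ReachableWithin {x | x ∈ s ∧ G.ReachableWithin s a x} a b := by
  classical
  obtain ⟨w, hw⟩ := h
  exact ⟨w, fun x hx => ⟨hw x hx, w.takeUntil x hx,
    fun y hy => hw y (w.support_takeUntil_subset_support hx hy)⟩⟩

end ReachableWithin

lemma Adj.reachableWithin {s : Set V} {a b : V} (h : G.Adj a b) (ha : a ∈ s) (hb : b ∈ s) :
    G.ReachableWithin s a b :=
  ⟨.cons h .nil, by simp [ha, hb]⟩

lemma Reachable.reachableWithin {s : Set V} {a b : s} (h : (G.induce s).Reachable a b) :
    G.ReachableWithin s a b :=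
  let ⟨w⟩ := h
  ⟨w.map (Embedding.induce s).toHom, fun x hx => by
    obtain ⟨y, -, rfl⟩ := List.mem_map.1 (Walk.support_map _ w ▸ hx)
    exact y.2⟩

lemma reachableWithin_of_reachable {ι : Type*} {H : SimpleGraph ι} {s : Set V} (φ : ι → V)
    (hφ : ∀ i, φ i ∈ s) (hadj : ∀ i j, H.Adj i j → G.ReachableWithin s (φ i) (φ j)) {i j : ι}
    (h : H.Reachable i j) : G.ReachableWithin s (φ i) (φ j) := by
  obtain ⟨w⟩ := h
  induction w with
  | nil => exact .refl (hφ _)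
  | cons h _ ih => exact (hadj _ _ h).trans ih

lemma connected_induce_of_reachableWithin {ι : Type*} {H : SimpleGraph ι} {s : Set V}
    (hH : H.Connected) (φ : ι → V) (hφ : ∀ i, φ i ∈ s)
    (hadj : ∀ i j, H.Adj i j → G.ReachableWithin s (φ i) (φ j))
    (hs : ∀ z ∈ s, ∃ i, G.ReachableWithin s (φ i) z) : (G.induce s).Connected := by
  obtain ⟨i⟩ := hH.nonempty
  rw [connected_iff_exists_forall_reachable]
  refine ⟨⟨φ i, hφ i⟩, fun ⟨z, hz⟩ => ?_⟩
  obtain ⟨j, hjz⟩ := hs z hz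
  exact ((reachableWithin_of_reachable φ hφ hadj (hH.preconnected i j)).trans hjz).reachable_induce

lemma ReachableWithin.exists_adj_reachableWithin_diff {s : Set V} {ρ x : V}
    (h : G.ReachableWithin s ρ x) (hx : x ≠ ρ) :
    ∃ v, G.Adj ρ v ∧ G.ReachableWithin (s \ {ρ}) v x := by
  suffices ∀ {y} (w : G.Walk y x), (∀ z ∈ w.support, z ∈ s) →
      G.ReachableWithin (s \ {ρ}) y x ∨ ∃ v, G.Adj ρ v ∧ G.ReachableWithin (s \ {ρ}) v x by
    obtain ⟨w, hw⟩ := h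
    exact (this w hw).resolve_left fun h => h.left_mem.2 rfl
  clear h
  intro y w hw
  induction w with
  | nil => exact .inl (.refl ⟨hw _ (by simp), hx⟩)
  | @cons y m _ hym w ih =>
    rcases ih hx fun z hz => hw z (by simp [hz]) with hm | hv
    · by_cases hy : y = ρ
      · exact .inr ⟨m, hy ▸ hym, hm⟩
      · exact .inl <|
          (hym.reachableWithin (s := s \ {ρ}) ⟨hw y (by simp), hy⟩ hm.left_mem).trans hm
    · exact .inr hv

lemma exists_component_erase [DecidableEq V] {U : Finset V} {ρ x : V}
    (hconn : ∀ y ∈ U, G.ReachableWithin U ρ y) (hx : x ∈ U) (hxρ : x ≠ ρ) :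
    ∃ C : Finset V, ∃ v, C ⊆ U.erase ρ ∧ x ∈ C ∧ v ∈ C ∧ G.Adj ρ v ∧
      (∀ z ∈ C, G.ReachableWithin C v z) ∧ ∀ y ∈ U \ C, G.ReachableWithin ↑(U \ C) ρ y := by
  classical
  set U' := U.erase ρ
  have hexit : ∀ y ∈ U', ∃ v, G.Adj ρ v ∧ G.ReachableWithin U' v y := fun y hy => by
    simpa [U', coe_erase] using (hconn y (mem_of_mem_erase hy)).exists_adj_reachableWithin_diff
      (ne_of_mem_erase hy)
  set C := U'.filter (G.ReachableWithin U' x)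
  have hmemC : ∀ {z}, z ∈ C ↔ z ∈ U' ∧ G.ReachableWithin U' x z := mem_filter
  obtain ⟨v, hρv, hvx⟩ := hexit x (mem_erase.2 ⟨hxρ, hx⟩)
  refine ⟨C, v, filter_subset _ _, hmemC.2 ⟨mem_erase.2 ⟨hxρ, hx⟩, .refl hvx.right_mem⟩,
    hmemC.2 ⟨hvx.left_mem, hvx.symm⟩, hρv, fun z hz => ?_, fun y hy => ?_⟩
  · refine ((hvx.trans (hmemC.1 hz).2).within_component).mono le_rfl ?_
    rintro y ⟨hy, hvy⟩
    exact hmemC.2 ⟨hy, hvx.symm.trans hvy⟩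
  · obtain ⟨hyU, hyC⟩ := mem_sdiff.1 hy
    have hρ : ρ ∈ U \ C :=
      mem_sdiff.2 ⟨(hconn y hyU).left_mem, fun h => (mem_erase.1 (filter_subset _ _ h)).1 rfl⟩
    by_cases hyρ : y = ρ
    · rw [hyρ]; exact .refl hρ
    obtain ⟨v', hρv', hv'y⟩ := hexit y (mem_erase.2 ⟨hyρ, hyU⟩)
    have hcomp : {z | z ∈ (U' : Set V) ∧ G.ReachableWithin U' v' z} ⊆ ↑(U \ C) := by
      rintro z ⟨hz, hv'z⟩
      refine mem_sdiff.2 ⟨mem_of_mem_erase hz, fun hzC => hyC (hmemC.2 ⟨hv'y.right_mem, ?_⟩)⟩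
      exact (hmemC.1 hzC).2.trans (hv'z.symm.trans hv'y)
    exact (hρv'.reachableWithin hρ (hcomp ⟨hv'y.left_mem, .refl hv'y.left_mem⟩)).trans
      (hv'y.within_component.mono le_rfl hcomp)

end SimpleGraph

lemma Finset.sum_union_le_sum_add_sum {ι M : Type*} [DecidableEq ι] [AddCommMonoid M]
    [PartialOrder M] [CanonicallyOrderedAdd M] (s t : Finset ι) (g : ι → M) :
    ∑ i ∈ s ∪ t, g i ≤ ∑ i ∈ s, g i + ∑ i ∈ t, g i := by
  rw [← sum_union_inter]
  exact le_self_add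

section Linkage

variable {V : Type*} [DecidableEq V] (G : SimpleGraph V) (S : Finset V) (f : Sym2 V → ℕ∞)

/-- The invariant of the induction for part (i): the links `E` join the terminals `U \ S`, each
link `e` paid `⌊f e / 2⌋`, and the root `ρ` reaches the port terminal `p` through at most `d`
points of `S`; the points of `S` in `U` pay for all of it. -/
structure IsTerminalLinkage (U : Finset V) (ρ : V) (E : Finset (Sym2 V)) (p : V) (d : ℕ) :
    Prop where
  port_mem : p ∈ U \ S
  ne_top : ∀ e ∈ E, f e ≠ ⊤
  exists_walk : ∃ w : G.Walk ρ p, w.countIn S ≤ d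
  budget : ∑ e ∈ E, (f e).toNat / 2 + d ≤ #(U ∩ S)
  reachableWithin : ∀ q ∈ U \ S, (fromEdgeSet (E : Set (Sym2 V))).ReachableWithin ↑(U \ S) p q

variable {G S f}

lemma isTerminalLinkage_of_sdiff_eq_singleton {U : Finset V} {ρ : V} (hU : U \ S = {ρ}) :
    IsTerminalLinkage G S f U ρ ∅ ρ 0 where
  port_mem := hU ▸ mem_singleton_self ρ
  ne_top := by simp
  exists_walk := ⟨.nil, by simp [(mem_sdiff.1 (hU ▸ mem_singleton_self ρ : ρ ∈ U \ S)).2]⟩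
  budget := by simp
  reachableWithin q hq := by
    rw [hU, mem_singleton] at hq
    rw [hq]
    exact .refl (by simp [hU])

lemma card_union_inter_of_disjoint {R C : Finset V} (h : Disjoint R C) :
    #((R ∪ C) ∩ S) = #(R ∩ S) + #(C ∩ S) := by
  rw [union_inter_distrib_right,
    card_union_of_disjoint (h.mono inter_subset_left inter_subset_left)]

namespace IsTerminalLinkage

variable {R C : Finset V} {ρ v p p₁ p₂ : V} {d d₁ d₂ : ℕ} {E E₁ E₂ : Finset (Sym2 V)}

lemma extend (hC : IsTerminalLinkage G S f C v E p d) (hdisj : Disjoint R C) (hρv : G.Adj ρ v)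
    (hρ : ρ ∈ R) (hRS : R ⊆ S) : IsTerminalLinkage G S f (R ∪ C) ρ E p (d + 1) where
  port_mem := union_sdiff_distrib R C S ▸ mem_union_right _ hC.port_mem
  ne_top := hC.ne_top
  exists_walk := by
    obtain ⟨w, hw⟩ := hC.exists_walk
    exact ⟨.cons hρv w, by simp [hRS hρ]; omega⟩
  budget := by
    have : 0 < #(R ∩ S) := card_pos.2 ⟨ρ, mem_inter.2 ⟨hρ, hRS hρ⟩⟩
    have := hC.budget
    rw [card_union_inter_of_disjoint hdisj]
    omega
  reachableWithin q hq := by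
    rw [union_sdiff_distrib, sdiff_eq_empty_iff_subset.2 hRS, empty_union] at hq ⊢
    exact hC.reachableWithin q hq

lemma reachableWithin_insert_union (hR : IsTerminalLinkage G S f R ρ E₁ p₁ d₁)
    (hC : IsTerminalLinkage G S f C v E₂ p₂ d₂) (hdisj : Disjoint R C) :
    ∀ q ∈ (R ∪ C) \ S, (fromEdgeSet ↑(insert s(p₁, p₂) (E₁ ∪ E₂))).ReachableWithin
      ↑((R ∪ C) \ S) p₁ q := by
  have hterm : (R ∪ C) \ S = R \ S ∪ C \ S := union_sdiff_distrib R C S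
  have hp₁₂ : p₁ ≠ p₂ := fun h =>
    disjoint_left.1 hdisj (mem_sdiff.1 hR.port_mem).1 (h ▸ (mem_sdiff.1 hC.port_mem).1)
  have hlinked : (fromEdgeSet ↑(insert s(p₁, p₂) (E₁ ∪ E₂))).ReachableWithin ↑((R ∪ C) \ S)
      p₁ p₂ :=
    Adj.reachableWithin ⟨by simp, hp₁₂⟩ (hterm ▸ mem_union_left _ hR.port_mem)
      (hterm ▸ mem_union_right _ hC.port_mem)
  intro q hq
  rcases mem_union.1 (hterm ▸ hq) with hq | hq
  · exact (hR.reachableWithin q hq).mono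
      (fromEdgeSet_mono (coe_subset.2 (subset_union_left.trans (subset_insert _ _))))
      (by simp [hterm])
  · exact hlinked.trans ((hC.reachableWithin q hq).mono
      (fromEdgeSet_mono (coe_subset.2 (subset_union_right.trans (subset_insert _ _))))
      (by simp [hterm]))

lemma merge (hf : ∀ a b (w : G.Walk a b), f s(a, b) ≤ w.countIn S)
    (hR : IsTerminalLinkage G S f R ρ E₁ p₁ d₁) (hC : IsTerminalLinkage G S f C v E₂ p₂ d₂)
    (hdisj : Disjoint R C) (hρv : G.Adj ρ v) :
    ∃ p d, IsTerminalLinkage G S f (R ∪ C) ρ (insert s(p₁, p₂) (E₁ ∪ E₂)) p d := by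
  obtain ⟨w₁, hw₁⟩ := hR.exists_walk
  obtain ⟨w₂, hw₂⟩ := hC.exists_walk
  have hlink : f s(p₁, p₂) ≤ (d₁ + d₂ : ℕ) := by
    refine (hf _ _ (w₁.reverse.append (.cons hρv w₂))).trans ?_
    rw [Walk.countIn_append_cons, Walk.countIn_reverse]
    exact_mod_cast add_le_add hw₁ hw₂
  set E := insert s(p₁, p₂) (E₁ ∪ E₂)
  have hne_top : ∀ e ∈ E, f e ≠ ⊤ := by
    simp only [E, mem_insert, mem_union, forall_eq_or_imp]
    exact ⟨ne_top_of_le_ne_top (by simp) hlink, fun e he => he.elim (hR.ne_top e) (hC.ne_top e)⟩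
  have hsum : ∑ e ∈ E, (f e).toNat / 2 ≤
      (d₁ + d₂) / 2 + (∑ e ∈ E₁, (f e).toNat / 2 + ∑ e ∈ E₂, (f e).toNat / 2) := by
    refine (sum_union_le_sum_add_sum {s(p₁, p₂)} _ _).trans ?_
    rw [sum_singleton]
    gcongr
    · exact ENat.toNat_le_of_le_natCast hlink
    · exact sum_union_le_sum_add_sum _ _ _
  have hreach := hR.reachableWithin_insert_union hC hdisj
  have hport₁ : p₁ ∈ (R ∪ C) \ S := union_sdiff_distrib R C S ▸ mem_union_left _ hR.port_mem
  have hport₂ : p₂ ∈ (R ∪ C) \ S := union_sdiff_distrib R C S ▸ mem_union_right _ hC.port_mem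
  have hcard := card_union_inter_of_disjoint (S := S) hdisj
  have := hR.budget
  have := hC.budget
  -- the link costs `⌊(d₁ + d₂)/2⌋`: at most `d₂` if `d₁ ≤ d₂ + 1`, at most `d₁ - 1` otherwise
  by_cases hd : d₁ ≤ d₂ + 1
  · exact ⟨p₁, d₁, ⟨hport₁, hne_top, ⟨w₁, hw₁⟩, by omega, hreach⟩⟩
  · refine ⟨p₂, d₂ + 1, ⟨hport₂, hne_top, ⟨.cons hρv w₂, ?_⟩, by omega, fun q hq => ?_⟩⟩
    · simp only [Walk.countIn_cons]
      split_ifs <;> omega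
    · exact (hreach p₂ hport₂).symm.trans (hreach q hq)

end IsTerminalLinkage

theorem exists_isTerminalLinkage (hf : ∀ a b (w : G.Walk a b), f s(a, b) ≤ w.countIn S)
    (U : Finset V) {ρ : V} (hconn : ∀ x ∈ U, G.ReachableWithin U ρ x) (hU : (U \ S).Nonempty) :
    ∃ E p d, IsTerminalLinkage G S f U ρ E p d := by
  induction U using Finset.strongInduction generalizing ρ with
  | H U ih =>
  by_cases hsingle : U \ S ⊆ {ρ}
  · exact ⟨_, _, _, isTerminalLinkage_of_sdiff_eq_singleton (hU.subset_singleton_iff.1 hsingle)⟩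
  obtain ⟨x, hx, hxρ⟩ := not_subset.1 hsingle
  obtain ⟨C, v, hCU, hxC, hvC, hρv, hCconn, hRconn⟩ :=
    exists_component_erase hconn (mem_sdiff.1 hx).1 (by simpa using hxρ)
  have hρU : ρ ∈ U := (hconn x (mem_sdiff.1 hx).1).left_mem
  have hCU' : C ⊂ U := hCU.trans_ssubset (erase_ssubset hρU)
  have hunion : U \ C ∪ C = U := sdiff_union_of_subset hCU'.subset
  obtain ⟨E₂, p₂, d₂, hC⟩ :=
    ih C hCU' hCconn ⟨x, mem_sdiff.2 ⟨hxC, (mem_sdiff.1 hx).2⟩⟩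
  have hρ : ρ ∈ U \ C := mem_sdiff.2 ⟨hρU, fun h => (mem_erase.1 (hCU h)).1 rfl⟩
  by_cases hR : ((U \ C) \ S).Nonempty
  · obtain ⟨E₁, p₁, d₁, hR⟩ := ih (U \ C) (sdiff_ssubset hCU'.subset ⟨x, hxC⟩) hRconn hR
    obtain ⟨p, d, h⟩ := hR.merge hf hC sdiff_disjoint hρv
    exact ⟨_, p, d, hunion ▸ h⟩
  · exact ⟨E₂, p₂, d₂ + 1, hunion ▸ hC.extend sdiff_disjoint hρv hρ
      (sdiff_eq_empty_iff_subset.1 (not_nonempty_iff_eq_empty.1 hR))⟩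

end Linkage

lemma sum_edgeSet_map_val_le {V : Type*} [DecidableEq V] {s : Finset V} {T : SimpleGraph ↥s}
    {E : Finset (Sym2 V)} (hE : ∀ e ∈ T.edgeSet, e.map Subtype.val ∈ E) (g : Sym2 V → ℕ) :
    ∑ e ∈ T.edgeSet.toFinite.toFinset, g (e.map Subtype.val) ≤ ∑ e ∈ E, g e := by
  rw [← sum_image fun _ _ _ _ h => Sym2.map.injective Subtype.val_injective h]
  refine sum_le_sum_of_subset fun x hx => ?_
  obtain ⟨e, he, rfl⟩ := mem_image.1 hx
  exact hE e ((Set.Finite.mem_toFinset _).1 he)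

def diskGraph {X : Type*} [PseudoMetricSpace X] (r : ℝ) : SimpleGraph X where
  Adj x y := x ≠ y ∧ dist x y ≤ r
  symm := ⟨fun _ _ h => ⟨h.1.symm, by rw [_root_.dist_comm]; exact h.2⟩⟩
  loopless := ⟨fun _ h => h.1 rfl⟩

@[simp]
lemma diskGraph_adj {X : Type*} [PseudoMetricSpace X] {r : ℝ} {x y : X} :
    (diskGraph r).Adj x y ↔ x ≠ y ∧ dist x y ≤ r :=
  Iff.rfl

lemma reachableWithin_diskGraph {X : Type*} [PseudoMetricSpace X] {r : ℝ} {s : Set X} {a b : X}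
    (ha : a ∈ s) (hb : b ∈ s) (h : dist a b ≤ r) : (diskGraph r).ReachableWithin s a b := by
  by_cases hab : a = b
  · exact hab ▸ .refl ha
  · exact Adj.reachableWithin (diskGraph_adj.2 ⟨hab, h⟩) ha hb

section Bottleneck

variable {V : Finset Pt} (T : SimpleGraph ↥V)

lemma finite_edgeLengths : {d : ℝ | ∃ x y : ↥V, T.Adj x y ∧ d = dist (x : Pt) y}.Finite :=
  (Set.finite_range fun xy : ↥V × ↥V => dist (xy.1 : Pt) xy.2).subset <| by
    rintro _ ⟨x, y, -, rfl⟩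
    exact ⟨(x, y), rfl⟩

lemma dist_le_bottleneck {x y : ↥V} (h : T.Adj x y) : dist (x : Pt) y ≤ bottleneck T :=
  le_csSup (finite_edgeLengths T).bddAbove ⟨x, y, h, rfl⟩

lemma bottleneck_nonneg : 0 ≤ bottleneck T :=
  Real.sSup_nonneg <| by
    rintro _ ⟨x, y, -, rfl⟩
    exact dist_nonneg

lemma bottleneck_le {c : ℝ} (hc : 0 ≤ c) (h : ∀ x y, T.Adj x y → dist (x : Pt) y ≤ c) :
    bottleneck T ≤ c :=
  Real.sSup_le (by rintro _ ⟨x, y, hxy, rfl⟩; exact h x y hxy) hc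

lemma bottleneck_pos (hT : T.Connected) (hV : 1 < #V) : 0 < bottleneck T := by
  have : Nontrivial ↥V := Fintype.one_lt_card_iff_nontrivial.1 (by rwa [Fintype.card_coe])
  obtain ⟨x⟩ := hT.nonempty
  obtain ⟨y, hxy⟩ := hT.preconnected.exists_adj_of_nontrivial x
  exact (dist_pos.2 fun h => hxy.ne (Subtype.ext h)).trans_le (dist_le_bottleneck T hxy)

lemma bottleneck_mem_insert_zero {W : Finset Pt} (hVW : V ⊆ W) :
    bottleneck T ∈ insert 0 ((fun xy : Pt × Pt => dist xy.1 xy.2) '' ↑(W ×ˢ W)) := by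
  rcases Set.eq_empty_or_nonempty {d : ℝ | ∃ x y : ↥V, T.Adj x y ∧ d = dist (x : Pt) y} with h | h
  · exact .inl (by rw [bottleneck, h, Real.sSup_empty])
  · obtain ⟨x, y, -, hb⟩ := h.csSup_mem (finite_edgeLengths T)
    exact .inr ⟨(x, y), by simp [hVW x.2, hVW y.2], hb.symm⟩

end Bottleneck

section Steiner

variable {P S : Finset Pt} {k : ℕ} {r : ℝ}

lemma wgt_eq_sInf {p q : Pt} : wgt P S r p q =
    sInf {n : ℕ∞ | ∃ w : (stGraph P S r).Walk p q, w.IsPath ∧ n = w.countIn S} :=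
  rfl

lemma wgt_le_countIn {p q : Pt} (w : (stGraph P S r).Walk p q) : wgt P S r p q ≤ w.countIn S := by
  rw [wgt_eq_sInf]
  refine (sInf_le ?_).trans (Nat.cast_le.2 (w.countIn_bypass_le S))
  exact ⟨w.bypass, w.bypass_isPath, rfl⟩

lemma ewgt_le_countIn {p q : Pt} (w : (stGraph P S r).Walk p q) :
    ewgt P S r s(p, q) ≤ w.countIn S :=
  (min_le_left _ _).trans (wgt_le_countIn w)

lemma exists_walk_countIn_eq_wgt {p q : Pt} (h : wgt P S r p q ≠ ⊤) :
    ∃ w : (stGraph P S r).Walk p q, (w.countIn S : ℕ∞) = wgt P S r p q := by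
  rw [wgt_eq_sInf] at h ⊢
  set N := {n : ℕ∞ | ∃ w : (stGraph P S r).Walk p q, w.IsPath ∧ n = w.countIn S}
  obtain ⟨w, -, hw⟩ := csInf_mem (s := N)
    (Set.nonempty_iff_ne_empty.2 fun he => h (by rw [he, sInf_empty]))
  exact ⟨w, hw.symm⟩

lemma exists_walk_countIn_le_ewgt {p q : Pt} (h : ewgt P S r s(p, q) ≠ ⊤) :
    ∃ w : (stGraph P S r).Walk p q, w.countIn S ≤ (ewgt P S r s(p, q)).toNat := by
  change min (wgt P S r p q) (wgt P S r q p) ≠ ⊤ at h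
  change ∃ w : (stGraph P S r).Walk p q, w.countIn S ≤ (min (wgt P S r p q) (wgt P S r q p)).toNat
  rcases le_total (wgt P S r p q) (wgt P S r q p) with hle | hle
  · rw [min_eq_left hle] at h ⊢
    obtain ⟨w, hw⟩ := exists_walk_countIn_eq_wgt h
    exact ⟨w, by rw [← hw, ENat.toNat_natCast]⟩
  · rw [min_eq_right hle] at h ⊢
    obtain ⟨w, hw⟩ := exists_walk_countIn_eq_wgt h
    exact ⟨w.reverse, by rw [Walk.countIn_reverse, ← hw, ENat.toNat_natCast]⟩

/-- Keep every point of `P` and every other point of `S` along the walk: consecutive kept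
points are then at most `2 r` apart.  The anchor `a` is the last kept point, and `pick` records
that the last point of `S` was skipped, so that the next one has to be kept. -/
lemma exists_relay (hr : 0 ≤ r) {x y : Pt} (w : (stGraph P S r).Walk x y) (hy : y ∈ P)
    {s : Finset Pt} (hPs : P ⊆ s) (pick : Bool) {a : Pt} (ha : a ∈ s)
    (hax : dist a x ≤ if pick then 2 * r else r) :
    ∃ A ⊆ S, 2 * #A ≤ w.countIn S + pick.toNat ∧
      ∀ z ∈ insert y A, (diskGraph (2 * r)).ReachableWithin ↑(s ∪ A) a z := by
  induction w generalizing s pick a with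
  | nil =>
    refine ⟨∅, empty_subset _, by simp, fun z hz => ?_⟩
    rw [insert_empty, mem_singleton] at hz
    exact hz ▸ reachableWithin_diskGraph (by simp [ha]) (by simp [hPs hy])
      (by split_ifs at hax <;> linarith)
  | @cons x m y hxm w ih =>
    have hax₂ : dist a x ≤ 2 * r := by split_ifs at hax <;> linarith
    by_cases hxS : x ∈ S
    · cases pick
      · obtain ⟨A, hAS, hcard, hreach⟩ := ih hy hPs true ha
          (by simpa using (dist_triangle a x m).trans (by simp at hax; linarith [hxm.2.2.2]))
        exact ⟨A, hAS, by simp [hxS] at hcard ⊢; omega, hreach⟩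
      · obtain ⟨A, hAS, hcard, hreach⟩ :=
          ih hy (hPs.trans (subset_insert x s)) false (mem_insert_self x s)
            (by simpa using hxm.2.2.2)
        rw [insert_union, ← union_insert] at hreach
        have hax' :=
          reachableWithin_diskGraph (s := ↑(s ∪ insert x A)) (by simp [ha]) (by simp) hax₂
        refine ⟨insert x A, insert_subset hxS hAS, ?_, fun z hz => ?_⟩
        · have := card_insert_le x A
          simp [hxS] at hcard ⊢
          omega
        · rcases mem_insert.1 (insert_comm y x A ▸ hz) with rfl | hz
          exacts [hax', hax'.trans (hreach z hz)]
    · have hxP : x ∈ P := (mem_union.1 hxm.2.1).resolve_right hxS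
      obtain ⟨A, hAS, hcard, hreach⟩ := ih hy hPs false (hPs hxP) (by simpa using hxm.2.2.2)
      exact ⟨A, hAS, by simp [hxS] at hcard ⊢; omega, fun z hz =>
        (reachableWithin_diskGraph (by simp [ha]) (by simp [hPs hxP]) hax₂).trans (hreach z hz)⟩

theorem goodR_bottleneck (hPS : Disjoint P S) (hP : P.Nonempty) {S' : Finset Pt} (hS' : S' ⊆ S)
    (hk : #S' ≤ k) {T : SimpleGraph ↥(P ∪ S')} (hT : T.Connected) :
    goodR P S k (bottleneck T) := by
  obtain ⟨ρ, hρ⟩ := hP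
  have hPS' : ∀ x ∈ P, x ∉ S := fun _ hx => Finset.disjoint_left.1 hPS hx
  set G := stGraph P S (bottleneck T)
  have hTG : T ≤ G.induce ↑(P ∪ S') := fun x y h =>
    ⟨fun hxy => h.ne (Subtype.ext hxy), union_subset_union_right hS' x.2,
      union_subset_union_right hS' y.2, dist_le_bottleneck T h⟩
  have hconn : ∀ x ∈ P ∪ S', G.ReachableWithin ↑(P ∪ S') ρ x := fun x hx =>
    ((hT.mono hTG).preconnected ⟨ρ, mem_union_left _ hρ⟩ ⟨x, hx⟩).reachableWithin
  have hterm : (P ∪ S') \ S = P := by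
    ext x
    have := hPS' x
    have := @hS' x
    simp only [mem_sdiff, mem_union]
    tauto
  obtain ⟨E, p, d, hL⟩ := exists_isTerminalLinkage (fun _ _ w => ewgt_le_countIn w) (P ∪ S') hconn
    (by rw [hterm]; exact ⟨ρ, hρ⟩)
  have hH : ((fromEdgeSet (E : Set (Sym2 Pt))).induce (P : Set Pt)).Connected := by
    rw [connected_iff_exists_forall_reachable]
    have hp := hL.port_mem
    rw [hterm] at hp
    refine ⟨⟨p, hp⟩, fun q => ?_⟩
    have := hL.reachableWithin q (by rw [hterm]; exact q.2)
    rw [hterm] at this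
    exact this.reachable_induce
  obtain ⟨T', hT'H, hT'⟩ := hH.exists_isTree_le
  have hmem : ∀ e ∈ T'.edgeSet, e.map Subtype.val ∈ E := by
    refine fun e he => Sym2.ind (fun a b he => ?_) e he
    exact (hT'H he).1
  refine ⟨T', hT', fun e he => hL.ne_top _ (hmem e he), ?_⟩
  calc _ ≤ ∑ e ∈ E, (ewgt P S (bottleneck T) e).toNat / 2 := sum_edgeSet_map_val_le hmem _
    _ ≤ #((P ∪ S') ∩ S) := by have := hL.budget; omega
    _ ≤ #S' := card_le_card fun x hx => by
        have := hPS' x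
        simp only [mem_inter, mem_union] at hx
        tauto
    _ ≤ k := hk

lemma exists_relay_of_ewgt_ne_top (hr : 0 ≤ r) {e : Sym2 ↥P}
    (he : ewgt P S r (e.map Subtype.val) ≠ ⊤) :
    ∃ A ⊆ S, #A ≤ (ewgt P S r (e.map Subtype.val)).toNat / 2 ∧
      (∀ a b : ↥P, e = s(a, b) → (diskGraph (2 * r)).ReachableWithin ↑(P ∪ A) (a : Pt) b) ∧
      ∀ z ∈ A, ∃ a ∈ P, (diskGraph (2 * r)).ReachableWithin ↑(P ∪ A) a z := by
  induction e using Sym2.ind with | _ a b =>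
  rw [Sym2.map_mk] at he ⊢
  obtain ⟨w, hw⟩ := exists_walk_countIn_le_ewgt he
  obtain ⟨A, hAS, hcard, hreach⟩ := exists_relay hr w b.2 subset_rfl false a.2 (by simp [hr])
  refine ⟨A, hAS, by simp at hcard; omega, fun a' b' h => ?_,
    fun z hz => ⟨a, a.2, hreach z (mem_insert_of_mem hz)⟩⟩
  rcases Sym2.eq_iff.1 h with ⟨rfl, rfl⟩ | ⟨rfl, rfl⟩
  exacts [hreach _ (mem_insert_self _ _), (hreach _ (mem_insert_self _ _)).symm]

theorem exists_isTree_bottleneck_le_of_goodR (hr : 0 < r) (hg : goodR P S k r) :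
    ∃ S' ⊆ S, #S' ≤ k ∧ ∃ T : SimpleGraph ↥(P ∪ S'), T.IsTree ∧ bottleneck T ≤ 2 * r := by
  classical
  obtain ⟨T', hT', hfin, hsum⟩ := hg
  choose A hA using fun e : Sym2 ↥P => show ∃ A, e ∈ T'.edgeSet → _ from
    if he : e ∈ T'.edgeSet then (exists_relay_of_ewgt_ne_top hr.le (hfin e he)).imp
      fun A hA _ => hA
    else ⟨∅, fun h => absurd h he⟩
  set ES := T'.edgeSet.toFinite.toFinset
  set S' := ES.biUnion A
  have hAS' : ∀ e ∈ T'.edgeSet, (↑(P ∪ A e) : Set Pt) ⊆ ↑(P ∪ S') := fun e he =>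
    coe_subset.2 (union_subset_union_right (subset_biUnion_of_mem A (by simpa [ES] using he)))
  refine ⟨S', biUnion_subset.2 fun e he => (hA e (by simpa [ES] using he)).1, ?_, ?_⟩
  · calc #S' ≤ ∑ e ∈ ES, #(A e) := card_biUnion_le
      _ ≤ ∑ e ∈ ES, (ewgt P S r (e.map Subtype.val)).toNat / 2 :=
          sum_le_sum fun e he => (hA e (by simpa [ES] using he)).2.1
      _ ≤ k := hsum
  have hH : ((diskGraph (2 * r)).induce (↑(P ∪ S') : Set Pt)).Connected := by
    refine connected_induce_of_reachableWithin hT'.connected Subtype.val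
      (fun a => mem_union_left _ a.2)
      (fun a b hab => ((hA _ hab).2.2.1 a b rfl).mono le_rfl (hAS' _ hab)) fun z hz => ?_
    rcases mem_union.1 hz with hz | hz
    · exact ⟨⟨z, hz⟩, .refl (mem_union_left _ hz)⟩
    · obtain ⟨e, he, hze⟩ := mem_biUnion.1 hz
      have he : e ∈ T'.edgeSet := by simpa [ES] using he
      obtain ⟨a, ha, haz⟩ := (hA e he).2.2.2 z hze
      exact ⟨⟨a, ha⟩, haz.mono le_rfl (hAS' e he)⟩
  obtain ⟨T, hTH, hT⟩ := hH.exists_isTree_le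
  exact ⟨T, hT, bottleneck_le T (by positivity) fun x y h => (hTH h).2⟩

theorem exists_isTree_forall_bottleneck_le
    (hex : ∃ S' ⊆ S, #S' ≤ k ∧ ∃ T : SimpleGraph ↥(P ∪ S'), T.IsTree) :
    ∃ S₀ ⊆ S, #S₀ ≤ k ∧ ∃ T₀ : SimpleGraph ↥(P ∪ S₀), T₀.IsTree ∧
      ∀ S' ⊆ S, #S' ≤ k → ∀ T : SimpleGraph ↥(P ∪ S'), T.IsTree → bottleneck T₀ ≤ bottleneck T := by
  set B := {b | ∃ S' ⊆ S, #S' ≤ k ∧ ∃ T : SimpleGraph ↥(P ∪ S'), T.IsTree ∧ bottleneck T = b}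
  have hB : B.Finite := (((P ∪ S) ×ˢ (P ∪ S)).finite_toSet.image _ |>.insert 0).subset <| by
    rintro _ ⟨S', hS', -, T, -, rfl⟩
    exact bottleneck_mem_insert_zero T (union_subset_union_right hS')
  obtain ⟨S', hS', hk, T, hT⟩ := hex
  obtain ⟨_, ⟨S₀, hS₀, hk₀, T₀, hT₀, rfl⟩, hmin⟩ :=
    Set.exists_min_image B id hB ⟨_, S', hS', hk, T, hT, rfl⟩
  exact ⟨S₀, hS₀, hk₀, T₀, hT₀, fun S' hS' hk T hT => hmin _ ⟨S', hS', hk, T, hT, rfl⟩⟩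

end Steiner

theorem stmt8 (P S : Finset Pt) (hPS : Disjoint P S) (hP : 2 ≤ P.card) (k : ℕ)
    (hex : ∃ S' : Finset Pt, S' ⊆ S ∧ S'.card ≤ k ∧
      ∃ T : SimpleGraph ↥(P ∪ S'), T.IsTree) :
    (∀ S' : Finset Pt, S' ⊆ S → S'.card ≤ k →
        ∀ T : SimpleGraph ↥(P ∪ S'), T.IsTree →
          sInf {r : ℝ | 0 < r ∧ goodR P S k r} ≤ bottleneck T) ∧
    (∃ S' : Finset Pt, S' ⊆ S ∧ S'.card ≤ k ∧
      ∃ T : SimpleGraph ↥(P ∪ S'), T.IsTree ∧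
        bottleneck T ≤ 2 * sInf {r : ℝ | 0 < r ∧ goodR P S k r}) ∧
    (∃ S' : Finset Pt, S' ⊆ S ∧ S'.card ≤ k ∧
      ∃ T : SimpleGraph ↥(P ∪ S'), T.IsTree ∧
        ∀ S'' : Finset Pt, S'' ⊆ S → S''.card ≤ k →
          ∀ T'' : SimpleGraph ↥(P ∪ S''), T''.IsTree →
            bottleneck T ≤ 2 * bottleneck T'') := by
  set A := {r : ℝ | 0 < r ∧ goodR P S k r}
  have hmemA : ∀ S' ⊆ S, #S' ≤ k → ∀ T : SimpleGraph ↥(P ∪ S'), T.IsTree → bottleneck T ∈ A :=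
    fun S' hS' hk T hT =>
      ⟨bottleneck_pos T hT.connected (hP.trans (card_le_card subset_union_left)),
        goodR_bottleneck hPS (card_pos.1 (by omega)) hS' hk hT.connected⟩
  obtain ⟨S₀, hS₀, hk₀, T₀, hT₀, hmin⟩ := exists_isTree_forall_bottleneck_le hex
  have hT₀A : ∀ r ∈ A, bottleneck T₀ ≤ 2 * r := fun r ⟨hr, hg⟩ => by
    obtain ⟨S', hS', hk, T, hT, hTr⟩ := exists_isTree_bottleneck_le_of_goodR hr hg
    exact (hmin S' hS' hk T hT).trans hTr
  refine ⟨fun S' hS' hk T hT => csInf_le ⟨0, fun r hr => hr.1.le⟩ (hmemA S' hS' hk T hT),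
    ⟨S₀, hS₀, hk₀, T₀, hT₀, ?_⟩, ⟨S₀, hS₀, hk₀, T₀, hT₀, fun S' hS' hk T hT => ?_⟩⟩
  · obtain ⟨S', hS', hk, T, hT⟩ := hex
    have := le_csInf ⟨_, hmemA S' hS' hk T hT⟩ fun r hr => (div_le_iff₀' two_pos).2 (hT₀A r hr)
    linarith
  · linarith [hmin S' hS' hk T hT, bottleneck_nonneg T]
end
end

section
/- Let (X,d) be a metric space, let r > 0, and let p = u_0, u_1, …, u_{l} = q be a sequence of points of X with d(u_j, u_{j+1}) ≤ r for all 0 ≤ j < l, where each interior point u_j (0 < j < l) is labeled either as a terminal or as a Steiner point, and exactly w of the interior points are Steiner points. Then there exists a subsequence p = u_{j_0}, u_{j_1}, …, u_{j_t} = q (with 0 = j_0 < j_1 < … < j_t = l) such that d(u_{j_i}, u_{j_{i+1}}) ≤ 2r for all 0 ≤ i < t and at most ⌊w/2⌋ of the points u_{j_1}, …, u_{j_{t-1}} are Steiner points. -/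
/-!
Walk along the path and prune greedily: a Steiner point is deleted and the point right after
it is kept whatever its label. Since no two consecutive points are deleted, each new step
jumps over at most one point and has length at most `2r` by the triangle inequality. A Steiner
point is only kept when it directly follows a deleted Steiner point, so the kept Steiner points
inject into the deleted ones and number at most `⌊w/2⌋`.
-/

namespace List

variable {α β : Type*}

def skipMarked (P : α → Bool) : List α → List α
  | [] => []
  | [a] => if P a then [] else [a]
  | a :: b :: l => if P a then b :: skipMarked P l else a :: skipMarked P (b :: l)

variable (P : α → Bool)

theorem skipMarked_sublist (l : List α) : (skipMarked P l).Sublist l := by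
  induction l using skipMarked.induct P with
  | case1 => simp [skipMarked]
  | case2 a ha => simp [skipMarked, ha]
  | case3 a ha => simp [skipMarked, ha]
  | case4 a b l ha ih => simpa [skipMarked, ha] using (ih.cons_cons b).cons a
  | case5 a b l ha ih => simpa [skipMarked, ha] using ih.cons_cons a

theorem length_filter_skipMarked_le (l : List α) :
    ((skipMarked P l).filter P).length ≤ (l.filter P).length / 2 := by
  induction l using skipMarked.induct P with
  | case1 => simp [skipMarked]
  | case2 a ha => simp [skipMarked, ha]
  | case3 a ha => simp [skipMarked, ha]
  | case4 a b l ha ih =>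
    by_cases hb : P b <;> simp [skipMarked, ha, hb] at * <;> omega
  | case5 a b l ha ih => simpa [skipMarked, ha, filter_cons] using ih

theorem isChain_skipMarked {R S : β → β → Prop} (hRS : ∀ a b, R a b → S a b)
    (hRRS : ∀ a b c, R a b → R b c → S a c) (f : α → β) (q : β) (l : List α) (p : β)
    (h : IsChain R (p :: l.map f ++ [q])) :
    IsChain S (p :: (skipMarked P l).map f ++ [q]) := by
  induction l using skipMarked.induct P generalizing p with
  | case1 => simpa [skipMarked] using hRS _ _ (by simpa using h)
  | case2 a ha =>
    simp only [map_cons, map_nil, cons_append, nil_append, isChain_cons_cons,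
      isChain_singleton, and_true] at h
    simpa [skipMarked, ha] using hRRS _ _ _ h.1 h.2
  | case3 a ha =>
    simp only [map_cons, map_nil, cons_append, nil_append, isChain_cons_cons,
      isChain_singleton, and_true] at h
    simpa [skipMarked, ha] using And.intro (hRS _ _ h.1) (hRS _ _ h.2)
  | case4 a b l ha ih =>
    simp only [map_cons, cons_append, isChain_cons_cons] at h
    obtain ⟨hpa, hab, hrest⟩ := h
    simpa [skipMarked, ha] using And.intro (hRRS _ _ _ hpa hab) (ih _ hrest)
  | case5 a b l ha ih =>
    rw [map_cons, cons_append, cons_append, isChain_cons_cons] at h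
    simpa [skipMarked, ha] using And.intro (hRS _ _ h.1) (ih _ h.2)

end List

/-- Interior points carry their label, `true` marking a Steiner point; the endpoints `p` and `q`
are not in `int`. -/
theorem stmt9_general {X : Type*} [MetricSpace X] (r : ℝ) (p q : X)
    (int : List (X × Bool))
    (h : List.Chain' (fun a b => dist a b ≤ r) (p :: int.map Prod.fst ++ [q])) :
    ∃ int' : List (X × Bool), int'.Sublist int ∧
      List.Chain' (fun a b => dist a b ≤ 2 * r) (p :: int'.map Prod.fst ++ [q]) ∧
      (int'.filter (fun x => x.2)).length ≤ (int.filter (fun x => x.2)).length / 2 := by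
  have step (a b : X) (hab : dist a b ≤ r) : dist a b ≤ 2 * r := by
    linarith [dist_nonneg (x := a) (y := b)]
  have jump (a b c : X) (hab : dist a b ≤ r) (hbc : dist b c ≤ r) : dist a c ≤ 2 * r := by
    linarith [dist_triangle a b c]
  exact ⟨int.skipMarked Prod.snd, int.skipMarked_sublist _,
    List.isChain_skipMarked _ step jump Prod.fst q int p h, int.length_filter_skipMarked_le _⟩

/-- A sequence `p = u_0, u_1, …, u_l = q` in a metric space with all consecutive distances
at most `r`, whose interior points are labeled as terminals (`false`) or Steiner points
(`true`), is encoded by the endpoints `p, q` and the list `int` of interior points with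
their labels.  One can pass to a subsequence of the interior points (a `List.Sublist`,
i.e. keeping the relative order, and keeping the endpoints `p` and `q`) such that all
consecutive distances are at most `2r` and at most `⌊w/2⌋` of the retained interior
points are Steiner points, where `w` is the number of Steiner points among the interior
points of the original sequence. -/
theorem stmt9 {X : Type*} [MetricSpace X] (r : ℝ) (hr : 0 < r) (p q : X)
    (int : List (X × Bool))
    (h : List.Chain' (fun a b => dist a b ≤ r) (p :: int.map Prod.fst ++ [q])) :
    ∃ int' : List (X × Bool), int'.Sublist int ∧
      List.Chain' (fun a b => dist a b ≤ 2 * r) (p :: int'.map Prod.fst ++ [q]) ∧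
      (int'.filter (fun x => x.2)).length ≤ (int.filter (fun x => x.2)).length / 2 :=
  stmt9_general r p q int h
end
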